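/- arXiv:1603.06228 — 2 statements merged into one kernel-verified Lean document; each statement's English description precedes it below -/
import Mathlib

section
/- Let f be nilpotent on V with generator tuple partitioned by exponents as U = (U_{a_1}, …, U_{a_m}), a_1 < ⋯ < a_m. If i < j, w ∈ U_{a_i}, and y ∈ U_{a_j}, then there exists an automorphism α of V commuting with f such that α(y) = w + y. -/
open LinearMap

variable {K : Type*} [Field K] {V : Type*} [AddCommGroup V] [Module K V]

/-- `X` is hyperinvariant for `f`: invariant under every endomorphism commuting with `f`. -/
def Hinv (f : V →ₗ[K] V) (X : Submodule K V) : Prop :=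
  ∀ g : V →ₗ[K] V, g ∘ₗ f = f ∘ₗ g → X.map g ≤ X

/-- `X` is characteristic for `f`: `f`-invariant and fixed by every automorphism commuting with `f`. -/
def Chinv (f : V →ₗ[K] V) (X : Submodule K V) : Prop :=
  X.map f ≤ X ∧
    ∀ α : V ≃ₗ[K] V, (α : V →ₗ[K] V) ∘ₗ f = f ∘ₗ (α : V →ₗ[K] V) →
      X.map (α : V →ₗ[K] V) = X

/-- The cyclic subspace generated by `x`. -/
def cyc (f : V →ₗ[K] V) (x : V) : Submodule K V :=
  Submodule.span K (Set.range fun i : ℕ => (f ^ i) x)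

/-- `x` has exponent `ℓ`. -/
def ExpEq (f : V →ₗ[K] V) (x : V) (ℓ : ℕ) : Prop :=
  (f ^ ℓ) x = 0 ∧ ∀ j < ℓ, (f ^ j) x ≠ 0

/-- `x` has height `q`. -/
def HeightEq (f : V →ₗ[K] V) (x : V) (q : ℕ) : Prop :=
  x ∈ LinearMap.range (f ^ q) ∧ x ∉ LinearMap.range (f ^ (q + 1))

/-- The `r`-th Ulm invariant: number of Jordan blocks of size `r` (for `r ≥ 1`). -/
noncomputable def ulm (f : V →ₗ[K] V) (r : ℕ) : ℕ :=
  Module.finrank K ↥(LinearMap.ker f ⊓ LinearMap.range (f ^ (r - 1))) -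
    Module.finrank K ↥(LinearMap.ker f ⊓ LinearMap.range (f ^ r))

/-- `u` is a generator tuple with exponents `t`. -/
def IsGenTuple {k : ℕ} (f : V →ₗ[K] V) (u : Fin k → V) (t : Fin k → ℕ) : Prop :=
  (∀ i, ExpEq f (u i) (t i)) ∧ DirectSum.IsInternal (fun i => cyc f (u i))

/-- The summand `⟨U_a⟩` of all cyclic subspaces whose generator has exponent `a`. -/
def subU {k : ℕ} (f : V →ₗ[K] V) (u : Fin k → V) (t : Fin k → ℕ) (a : ℕ) : Submodule K V :=
  ⨆ i ∈ {i : Fin k | t i = a}, cyc f (u i)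


/-!
The map `h` sending `f ^ n (u q)` to `f ^ n (u p)` and killing every other cyclic summand is well
defined because `t p ≤ t q`, commutes with `f`, and satisfies `h ∘ h = 0` because `p ≠ q`. Hence
`α = 1 + h` is an automorphism commuting with `f`, and `α (u q) = u q + u p`.
-/

variable {f : V →ₗ[K] V}

theorem ExpEq.linearIndependent {x : V} {ℓ : ℕ} (hx : ExpEq f x ℓ) :
    LinearIndependent K (fun j : Fin ℓ => (f ^ (j : ℕ)) x) := by
  rw [Fintype.linearIndependent_iff]
  intro c hc
  suffices h : ∀ n, ∀ j : Fin ℓ, (j : ℕ) = n → c j = 0 from fun j => h j j rfl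
  intro n
  induction n using Nat.strong_induction_on with
  | _ n ih =>
    rintro j rfl
    -- `f ^ (ℓ - 1 - j)` kills the terms above `j`; those below `j` vanish by induction
    have hj := congrArg (f ^ (ℓ - 1 - (j : ℕ))) hc
    rw [map_zero, map_sum, Finset.sum_eq_single j] at hj
    · rw [map_smul, ← Module.End.mul_apply, ← pow_add,
        Nat.sub_add_cancel (Nat.le_sub_one_of_lt j.isLt)] at hj
      exact (smul_eq_zero.mp hj).resolve_right (hx.2 _ (Nat.sub_one_lt_of_lt j.isLt))
    · intro i _ hij
      rcases lt_or_gt_of_ne hij with hlt | hgt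
      · rw [ih i hlt i rfl, zero_smul, map_zero]
      · rw [map_smul, ← Module.End.mul_apply, ← pow_add,
          Module.End.pow_map_zero_of_le (by omega) hx.1, smul_zero]
    · exact fun h => absurd (Finset.mem_univ j) h

theorem span_pow_apply_eq_cyc {x : V} {ℓ : ℕ} (hx : (f ^ ℓ) x = 0) :
    Submodule.span K (Set.range fun j : Fin ℓ => (f ^ (j : ℕ)) x) = cyc f x := by
  refine le_antisymm (Submodule.span_mono ?_) (Submodule.span_le.mpr ?_)
  · rintro _ ⟨j, rfl⟩
    exact ⟨j, rfl⟩
  · rintro _ ⟨n, rfl⟩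
    show (f ^ n) x ∈ _
    by_cases hn : n < ℓ
    · exact Submodule.subset_span ⟨⟨n, hn⟩, rfl⟩
    · rw [SetLike.mem_coe, Module.End.pow_map_zero_of_le (not_lt.mp hn) hx]
      exact Submodule.zero_mem _

noncomputable def ExpEq.cycBasis {x : V} {ℓ : ℕ} (hx : ExpEq f x ℓ) :
    Module.Basis (Fin ℓ) K (cyc f x) :=
  (Module.Basis.span hx.linearIndependent).map (LinearEquiv.ofEq _ _ (span_pow_apply_eq_cyc hx.1))

theorem ExpEq.cycBasis_apply {x : V} {ℓ : ℕ} (hx : ExpEq f x ℓ) (j : Fin ℓ) :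
    (hx.cycBasis j : V) = (f ^ (j : ℕ)) x := by
  simp [ExpEq.cycBasis, Module.Basis.span_apply]

namespace IsGenTuple

variable {k : ℕ} {u : Fin k → V} {t : Fin k → ℕ}

noncomputable def basis (hu : IsGenTuple f u t) : Module.Basis (Σ i, Fin (t i)) K V :=
  hu.2.collectedBasis fun i => (hu.1 i).cycBasis

theorem basis_apply (hu : IsGenTuple f u t) (s : Σ i, Fin (t i)) :
    hu.basis s = (f ^ (s.2 : ℕ)) (u s.1) := by
  rw [basis, DirectSum.IsInternal.collectedBasis_coe]
  exact ExpEq.cycBasis_apply _ _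

theorem ext_of_commute (hu : IsGenTuple f u t) {g₁ g₂ : V →ₗ[K] V} (h₁ : Commute g₁ f)
    (h₂ : Commute g₂ f) (h : ∀ i, g₁ (u i) = g₂ (u i)) : g₁ = g₂ :=
  hu.basis.ext fun ⟨i, j⟩ => by
    rw [basis_apply, ← Module.End.mul_apply, (h₁.pow_right _).eq, Module.End.mul_apply, h,
      ← Module.End.mul_apply, ← (h₂.pow_right _).eq, Module.End.mul_apply]

theorem exists_commute_apply_eq (hu : IsGenTuple f u t) (w : Fin k → V)
    (hw : ∀ i, (f ^ t i) (w i) = 0) :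
    ∃ g : V →ₗ[K] V, Commute g f ∧ ∀ i, g (u i) = w i := by
  let g := hu.basis.constr K fun s => (f ^ (s.2 : ℕ)) (w s.1)
  have hg : ∀ i n, g ((f ^ n) (u i)) = (f ^ n) (w i) := by
    intro i n
    by_cases hn : n < t i
    · simpa only [basis_apply] using hu.basis.constr_basis K _ ⟨i, ⟨n, hn⟩⟩
    · rw [Module.End.pow_map_zero_of_le (not_lt.mp hn) (hu.1 i).1,
        Module.End.pow_map_zero_of_le (not_lt.mp hn) (hw i), map_zero]
  refine ⟨g, hu.basis.ext fun ⟨i, j⟩ => ?_, fun i => by simpa using hg i 0⟩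
  show g (f _) = f (g _)
  rw [basis_apply, ← Module.End.mul_apply f, ← pow_succ', hg, hg, pow_succ', Module.End.mul_apply]

end IsGenTuple

theorem stmt4_general (f : V →ₗ[K] V)
    {k : ℕ} (u : Fin k → V) (t : Fin k → ℕ) (hu : IsGenTuple f u t)
    (p q : Fin k) (hpq : t p < t q) :
    ∃ α : V ≃ₗ[K] V, (α : V →ₗ[K] V) ∘ₗ f = f ∘ₗ (α : V →ₗ[K] V) ∧
      α (u q) = u p + u q := by
  have hpq' : p ≠ q := fun e => (e ▸ hpq).false
  obtain ⟨h, hcomm, hh⟩ := hu.exists_commute_apply_eq (fun i => if i = q then u p else 0) <| by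
    intro i
    split_ifs with hi
    · exact Module.End.pow_map_zero_of_le (hi ▸ hpq.le) (hu.1 p).1
    · exact map_zero _
  have hsq : h * h = 0 :=
    hu.ext_of_commute (hcomm.mul_left hcomm) (Commute.zero_left f) fun i => by
      by_cases hi : i = q <;> simp [hh, hi, hpq']
  let α := LinearMap.GeneralLinearGroup.generalLinearEquiv K V
    (IsNilpotent.isUnit_one_add ⟨2, by rw [sq, hsq]⟩).unit
  refine ⟨α, ((Commute.one_left f).add_left hcomm).eq, ?_⟩
  simp [α, hh, add_comm]

theorem stmt4 [FiniteDimensional K V] (f : V →ₗ[K] V) (hf : IsNilpotent f)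
    {k : ℕ} (u : Fin k → V) (t : Fin k → ℕ) (ht : Monotone t) (hu : IsGenTuple f u t)
    (p q : Fin k) (hpq : t p < t q) :
    ∃ α : V ≃ₗ[K] V, (α : V →ₗ[K] V) ∘ₗ f = f ∘ₗ (α : V →ₗ[K] V) ∧
      α (u q) = u p + u q :=
  stmt4_general f u t hu p q hpq
end

section
/- Let V = ⟨u_1⟩ ⊕ ⟨u_2⟩ with f nilpotent, e(u_1) = q and e(u_2) = q + 1 (two Jordan blocks of consecutive sizes). Then every f-invariant subspace W of V is marked, i.e., W has a Jordan basis extendable to a Jordan basis of V. -/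
open LinearMap

variable {K : Type*} [Field K] {V : Type*} [AddCommGroup V] [Module K V]

/-- `W` is a marked subspace: it is spanned by `f`-shifts of the members of some
generator tuple of `V` (equivalently, a Jordan basis of `W` extends to one of `V`). -/
def Marked (f : V →ₗ[K] V) (W : Submodule K V) : Prop :=
  ∃ (k : ℕ) (u : Fin k → V) (t r : Fin k → ℕ),
    IsGenTuple f u t ∧ (∀ i, r i ≤ t i) ∧ W = ⨆ i, cyc f ((f ^ r i) (u i))

/-!
Take `w ∈ W` of maximal exponent `e` and split it as `a + b` along `⟨u₁⟩ ⊕ ⟨u₂⟩`. One of the two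
components (the one in `⟨u₁⟩` if possible), living in a block of size `t`, has exponent `e` and
hence equals `f ^ (t - e)` of a generator of that block; because the block sizes differ by one, the
other component is divisible by `f ^ (t - e)` inside its own block, so a shear produces a new
generator `v` of exponent `t`, complementary to the other generator `v'`, with `f ^ (t - e) v = w`.
Maximality of `e` then gives `W = ⟨w⟩ ⊕ (W ∩ ⟨v'⟩)`, and an invariant subspace of a cyclic space is
generated by a power of the generator.
-/

open Polynomial

section Cyclic

variable {f : V →ₗ[K] V} {x y : V} {W : Submodule K V}

lemma pow_apply_aeval (n : ℕ) (p : K[X]) (x : V) :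
    (f ^ n) (aeval f p x) = aeval f p ((f ^ n) x) := by
  rw [← Module.End.mul_apply, ← Module.End.mul_apply]
  congr 1
  simpa using ((Commute.all (X ^ n) p).map (aeval f)).eq

lemma pow_apply_pow (m n : ℕ) (x : V) : (f ^ m) ((f ^ n) x) = (f ^ (m + n)) x := by
  rw [← Module.End.mul_apply, ← pow_add]

lemma pow_apply_eq_zero_of_le {m n : ℕ} (h : (f ^ m) x = 0) (hmn : m ≤ n) : (f ^ n) x = 0 := by
  rw [← Nat.sub_add_cancel hmn, ← pow_apply_pow, h, map_zero]

lemma mem_cyc_iff : y ∈ cyc f x ↔ ∃ p : K[X], aeval f p x = y := by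
  constructor
  · intro hy
    induction hy using Submodule.span_induction with
    | mem _ h => obtain ⟨i, rfl⟩ := h; exact ⟨X ^ i, by simp⟩
    | zero => exact ⟨0, by simp⟩
    | add _ _ _ _ ha hb =>
      obtain ⟨p, rfl⟩ := ha; obtain ⟨r, rfl⟩ := hb; exact ⟨p + r, by simp⟩
    | smul c _ _ ha => obtain ⟨p, rfl⟩ := ha; exact ⟨C c * p, by simp [Module.algebraMap_end_apply]⟩
  · rintro ⟨p, rfl⟩
    rw [aeval_eq_sum_range, LinearMap.coe_sum, Finset.sum_apply]
    exact Submodule.sum_mem _ fun i _ => Submodule.smul_mem _ _ (Submodule.subset_span ⟨i, rfl⟩)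

lemma aeval_apply_mem_cyc (p : K[X]) (x : V) : aeval f p x ∈ cyc f x :=
  mem_cyc_iff.2 ⟨p, rfl⟩

lemma pow_apply_mem_cyc (n : ℕ) (x : V) : (f ^ n) x ∈ cyc f x :=
  Submodule.subset_span ⟨n, rfl⟩

lemma self_mem_cyc (x : V) : x ∈ cyc f x := by
  simpa using pow_apply_mem_cyc (f := f) 0 x

lemma cyc_zero : cyc f 0 = ⊥ :=
  eq_bot_iff.2 (Submodule.span_le.2 (by rintro _ ⟨i, rfl⟩; simp))

lemma cyc_le_iff (hW : W.map f ≤ W) : cyc f x ≤ W ↔ x ∈ W := by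
  refine ⟨fun h => h (self_mem_cyc x), fun hx => Submodule.span_le.2 ?_⟩
  rintro _ ⟨i, rfl⟩
  induction i with
  | zero => simpa using hx
  | succ n ih => simpa [pow_succ', Module.End.mul_apply] using hW ⟨_, ih, rfl⟩

lemma map_cyc_le : (cyc f x).map f ≤ cyc f x := by
  rw [Submodule.map_le_iff_le_comap, cyc, Submodule.span_le]
  rintro _ ⟨i, rfl⟩
  exact Submodule.subset_span ⟨i + 1, by simp [pow_succ', Module.End.mul_apply]⟩

lemma cyc_le_cyc_of_mem (hy : y ∈ cyc f x) : cyc f y ≤ cyc f x :=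
  (cyc_le_iff map_cyc_le).2 hy

lemma pow_apply_mem_cyc_of_mem (n : ℕ) (hy : y ∈ cyc f x) : (f ^ n) y ∈ cyc f x :=
  cyc_le_cyc_of_mem hy (pow_apply_mem_cyc n y)

lemma pow_apply_eq_zero_of_mem_cyc {n : ℕ} (hx : (f ^ n) x = 0) (hy : y ∈ cyc f x) :
    (f ^ n) y = 0 := by
  obtain ⟨p, rfl⟩ := mem_cyc_iff.1 hy
  rw [pow_apply_aeval, hx, map_zero]

lemma map_pow_cyc (m : ℕ) (x : V) : (cyc f x).map (f ^ m) = cyc f ((f ^ m) x) := by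
  rw [cyc, Submodule.map_span, ← Set.range_comp]
  congr 1
  ext i
  simp [pow_apply_pow, add_comm]

lemma cyc_pow_le_cyc_pow {m n : ℕ} (hmn : m ≤ n) (x : V) :
    cyc f ((f ^ n) x) ≤ cyc f ((f ^ m) x) := by
  refine cyc_le_cyc_of_mem ?_
  rw [← Nat.sub_add_cancel hmn, ← pow_apply_pow]
  exact pow_apply_mem_cyc _ _

lemma pow_apply_eq_zero_of_disjoint {x' y' : V} (h : Disjoint (cyc f x) (cyc f y))
    (hx' : x' ∈ cyc f x) (hy' : y' ∈ cyc f y) {n : ℕ} (hn : (f ^ n) (x' + y') = 0) :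
    (f ^ n) x' = 0 ∧ (f ^ n) y' = 0 := by
  rw [map_add, add_eq_zero_iff_eq_neg] at hn
  have hx0 : (f ^ n) x' = 0 := Submodule.disjoint_def.1 h _ (pow_apply_mem_cyc_of_mem n hx')
    (hn ▸ neg_mem (pow_apply_mem_cyc_of_mem n hy'))
  exact ⟨hx0, by simpa [hx0] using hn⟩

lemma aeval_apply_eq_zero_of_X_pow_dvd {ℓ : ℕ} {p : K[X]} (hx : (f ^ ℓ) x = 0) (hp : X ^ ℓ ∣ p) :
    aeval f p x = 0 := by
  obtain ⟨s, rfl⟩ := hp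
  simp [Module.End.mul_apply, pow_apply_aeval, hx]

lemma cyc_aeval_eq_of_not_X_dvd {ℓ : ℕ} {p : K[X]} (hx : (f ^ ℓ) x = 0) (hp : ¬X ∣ p) :
    cyc f (aeval f p x) = cyc f x := by
  refine le_antisymm (cyc_le_cyc_of_mem (aeval_apply_mem_cyc p x)) (cyc_le_cyc_of_mem ?_)
  obtain ⟨a, b, hab⟩ := (irreducible_X.coprime_iff_not_dvd.2 hp).pow_left (m := ℓ)
  have hx' : aeval f b (aeval f p x) = x :=
    calc aeval f b (aeval f p x) = aeval f (a * X ^ ℓ + b * p) x := by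
          rw [map_add, LinearMap.add_apply, aeval_apply_eq_zero_of_X_pow_dvd hx
            (dvd_mul_left _ a), zero_add, map_mul, Module.End.mul_apply]
      _ = x := by rw [hab, map_one, Module.End.one_apply]
  have h := aeval_apply_mem_cyc (f := f) b (aeval f p x)
  rwa [hx'] at h

namespace ExpEq

variable {ℓ : ℕ}

lemma le_of_pow_apply_eq_zero {N : ℕ} (h : ExpEq f x ℓ) (hN : (f ^ N) x = 0) : ℓ ≤ N := by
  by_contra! hc
  exact h.2 N hc hN

lemma of_cyc_eq (h : ExpEq f x ℓ) (hyx : cyc f y = cyc f x) : ExpEq f y ℓ :=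
  ⟨pow_apply_eq_zero_of_mem_cyc h.1 (hyx ▸ self_mem_cyc y),
    fun j hj h0 => h.2 j hj (pow_apply_eq_zero_of_mem_cyc h0 (hyx ▸ self_mem_cyc x))⟩

end ExpEq

lemma expEq_succ {n : ℕ} (h : (f ^ (n + 1)) x = 0) (hn : (f ^ n) x ≠ 0) : ExpEq f x (n + 1) :=
  ⟨h, fun _ hj h0 => hn (pow_apply_eq_zero_of_le h0 (Nat.lt_succ_iff.1 hj))⟩

lemma X_pow_dvd_of_aeval_apply_eq_zero {ℓ : ℕ} {p : K[X]} (hx : ExpEq f x ℓ)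
    (hp : aeval f p x = 0) : X ^ ℓ ∣ p := by
  rcases eq_or_ne p 0 with rfl | hp0
  · exact dvd_zero _
  obtain ⟨r, hpr, hr⟩ := p.exists_eq_pow_rootMultiplicity_mul_and_not_dvd hp0 0
  rw [map_zero, sub_zero] at hpr hr
  set i := p.rootMultiplicity 0
  have hi : (f ^ i) x = 0 := by
    have hri : aeval f r ((f ^ i) x) = 0 := by
      rw [← pow_apply_aeval]
      simpa [hpr, Module.End.mul_apply] using hp
    have hcyc := cyc_aeval_eq_of_not_X_dvd
      (pow_apply_eq_zero_of_mem_cyc hx.1 (pow_apply_mem_cyc i x)) hr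
    rw [hri, cyc_zero] at hcyc
    exact (Submodule.mem_bot K).1 (hcyc ▸ self_mem_cyc _)
  rw [hpr]
  exact (pow_dvd_pow X (hx.le_of_pow_apply_eq_zero hi)).mul_right r

lemma mem_cyc_pow_of_pow_apply_eq_zero {ℓ j : ℕ} (hx : ExpEq f x ℓ) (hy : y ∈ cyc f x)
    (hj : (f ^ j) y = 0) : y ∈ cyc f ((f ^ (ℓ - j)) x) := by
  obtain ⟨p, rfl⟩ := mem_cyc_iff.1 hy
  have hdvd : X ^ ℓ ∣ X ^ j * p := X_pow_dvd_of_aeval_apply_eq_zero hx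
    (by simpa [Module.End.mul_apply, pow_apply_aeval] using hj)
  obtain ⟨s, rfl⟩ : X ^ (ℓ - j) ∣ p := by
    rw [X_pow_dvd_iff] at hdvd ⊢
    intro d hd
    simpa [coeff_X_pow_mul'] using hdvd (d + j) (by omega)
  rw [mul_comm, map_mul, Module.End.mul_apply, map_pow, aeval_X]
  exact aeval_apply_mem_cyc s _

end Cyclic

section Generators

variable {f : V →ₗ[K] V} {x y a b : V} {t e : ℕ}

lemma exists_generator_pow_apply_eq (hx : ExpEq f x t) (ha : a ∈ cyc f x) (hae : ExpEq f a e) :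
    ∃ x', ExpEq f x' t ∧ cyc f x' = cyc f x ∧ (f ^ (t - e)) x' = a := by
  obtain _ | n := e
  · exact ⟨x, hx, rfl, by simpa [hx.1] using hae.1.symm⟩
  have hnt : n + 1 ≤ t := hae.le_of_pow_apply_eq_zero (pow_apply_eq_zero_of_mem_cyc hx.1 ha)
  obtain ⟨p, rfl⟩ := mem_cyc_iff.1 (mem_cyc_pow_of_pow_apply_eq_zero hx ha hae.1)
  have hp : ¬X ∣ p := by
    rintro ⟨p', rfl⟩
    refine hae.2 n n.lt_succ_self ?_
    rw [map_mul, Module.End.mul_apply, aeval_X, ← Module.End.mul_apply, ← pow_succ,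
      pow_apply_aeval, pow_apply_pow, Nat.add_sub_cancel' hnt, hx.1, map_zero]
  have hcyc := cyc_aeval_eq_of_not_X_dvd hx.1 hp
  exact ⟨aeval f p x, hx.of_cyc_eq hcyc, hcyc, pow_apply_aeval _ _ _⟩

-- The shear `x ↦ x + y'` of `⟨x⟩ ⊕ ⟨y⟩` commutes with `f` as soon as `f ^ t` kills `y'`.
lemma expEq_add_and_isCompl {y' : V} (hc : IsCompl (cyc f x) (cyc f y)) (hx : ExpEq f x t)
    (hy' : y' ∈ cyc f y) (ht : (f ^ t) y' = 0) :
    ExpEq f (x + y') t ∧ IsCompl (cyc f (x + y')) (cyc f y) := by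
  have hxt : (f ^ t) (x + y') = 0 := by rw [map_add, hx.1, ht, add_zero]
  refine ⟨⟨hxt, fun j hj h0 =>
    hx.2 j hj (pow_apply_eq_zero_of_disjoint hc.disjoint (self_mem_cyc x) hy' h0).1⟩, ?_, ?_⟩
  · rw [Submodule.disjoint_def]
    intro z hz hzy
    obtain ⟨p, rfl⟩ := mem_cyc_iff.1 hz
    have hpx : aeval f p x = 0 := by
      refine Submodule.disjoint_def.1 hc.disjoint _ (aeval_apply_mem_cyc p x) ?_
      simpa using sub_mem hzy (cyc_le_cyc_of_mem hy' (aeval_apply_mem_cyc p y'))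
    exact aeval_apply_eq_zero_of_X_pow_dvd hxt (X_pow_dvd_of_aeval_apply_eq_zero hx hpx)
  · rw [codisjoint_iff, eq_top_iff, ← hc.sup_eq_top]
    have hsup : (cyc f (x + y') ⊔ cyc f y).map f ≤ cyc f (x + y') ⊔ cyc f y := by
      rw [Submodule.map_sup]
      exact sup_le_sup map_cyc_le map_cyc_le
    refine sup_le ((cyc_le_iff hsup).2 ?_) le_sup_right
    simpa using sub_mem (Submodule.mem_sup_left (self_mem_cyc (x + y')))
      (Submodule.mem_sup_right hy')

lemma exists_isCompl_pow_apply_eq (hc : IsCompl (cyc f x) (cyc f y)) (hx : ExpEq f x t)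
    (ha : a ∈ cyc f x) (hae : ExpEq f a e) (hb : b ∈ cyc f ((f ^ (t - e)) y))
    (hbe : (f ^ e) b = 0) :
    ∃ v, ExpEq f v t ∧ IsCompl (cyc f v) (cyc f y) ∧ (f ^ (t - e)) v = a + b := by
  have het : e ≤ t := hae.le_of_pow_apply_eq_zero (pow_apply_eq_zero_of_mem_cyc hx.1 ha)
  obtain ⟨x', hx', hcx, rfl⟩ := exists_generator_pow_apply_eq hx ha hae
  rw [← map_pow_cyc] at hb
  obtain ⟨y', hy', rfl⟩ := hb
  have ht : (f ^ t) y' = 0 := by rwa [pow_apply_pow, Nat.add_sub_cancel' het] at hbe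
  obtain ⟨hv, hcv⟩ := expEq_add_and_isCompl (hcx ▸ hc) hx' hy' ht
  exact ⟨x' + y', hv, hcv, map_add _ _ _⟩

end Generators

section Invariant

variable {f : V →ₗ[K] V} {W : Submodule K V}

lemma exists_expEq_forall_pow_apply_eq_zero (h : ∃ N, ∀ x ∈ W, (f ^ N) x = 0) :
    ∃ e, ∃ w ∈ W, ExpEq f w e ∧ ∀ x ∈ W, (f ^ e) x = 0 := by
  classical
  obtain ⟨w, hw, hwe⟩ : ∃ w ∈ W, ExpEq f w (Nat.find h) := by
    cases hn : Nat.find h with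
    | zero => exact ⟨0, W.zero_mem, map_zero _, fun j hj => absurd hj (Nat.not_lt_zero j)⟩
    | succ n =>
      obtain ⟨w, hw, hnw⟩ : ∃ w ∈ W, (f ^ n) w ≠ 0 := by
        simpa using Nat.find_min h (hn ▸ n.lt_succ_self)
      exact ⟨w, hw, expEq_succ (hn ▸ Nat.find_spec h w hw) hnw⟩
  exact ⟨Nat.find h, w, hw, hwe, Nat.find_spec h⟩

lemma exists_eq_cyc_pow_of_le_cyc {x : V} {ℓ : ℕ} (hx : ExpEq f x ℓ) (hW : W.map f ≤ W)
    (hWx : W ≤ cyc f x) : ∃ s ≤ ℓ, W = cyc f ((f ^ s) x) := by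
  obtain ⟨e, w, hwW, hwe, hkill⟩ := exists_expEq_forall_pow_apply_eq_zero
    ⟨ℓ, fun y hy => pow_apply_eq_zero_of_mem_cyc hx.1 (hWx hy)⟩
  obtain ⟨x', -, hcx, rfl⟩ := exists_generator_pow_apply_eq hx (hWx hwW) hwe
  refine ⟨ℓ - e, Nat.sub_le _ _, le_antisymm
    (fun y hy => mem_cyc_pow_of_pow_apply_eq_zero hx (hWx hy) (hkill y hy)) ?_⟩
  rw [← map_pow_cyc, ← hcx, map_pow_cyc]
  exact (cyc_le_iff hW).2 hwW

variable {v v' : V} {t t' e : ℕ}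

lemma eq_cyc_pow_sup_inf (hc : IsCompl (cyc f v) (cyc f v')) (hv : ExpEq f v t)
    (hW : W.map f ≤ W) (hwW : (f ^ (t - e)) v ∈ W) (hkill : ∀ x ∈ W, (f ^ e) x = 0) :
    W = cyc f ((f ^ (t - e)) v) ⊔ (W ⊓ cyc f v') := by
  refine le_antisymm (fun z hz => ?_) (sup_le ((cyc_le_iff hW).2 hwW) inf_le_left)
  obtain ⟨a, ha, b, hb, rfl⟩ := Submodule.mem_sup.1 (hc.sup_eq_top ▸ Submodule.mem_top : z ∈ _)
  have ha' := mem_cyc_pow_of_pow_apply_eq_zero hv ha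
    (pow_apply_eq_zero_of_disjoint hc.disjoint ha hb (hkill _ hz)).1
  have hbW : b ∈ W := by simpa using sub_mem hz ((cyc_le_iff hW).2 hwW ha')
  exact Submodule.mem_sup.2 ⟨a, ha', b, ⟨hbW, hb⟩, rfl⟩

lemma marked_cyc_pow_sup_cyc_pow {r r' : ℕ} (hc : IsCompl (cyc f v) (cyc f v'))
    (hv : ExpEq f v t) (hv' : ExpEq f v' t') (hr : r ≤ t) (hr' : r' ≤ t') :
    Marked f (cyc f ((f ^ r) v) ⊔ cyc f ((f ^ r') v')) := by
  refine ⟨2, ![v, v'], ![t, t'], ![r, r'], ⟨Fin.forall_fin_two.2 ⟨hv, hv'⟩, ?_⟩,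
    Fin.forall_fin_two.2 ⟨hr, hr'⟩, ?_⟩
  · rw [DirectSum.isInternal_submodule_iff_isCompl _ (i := 0) (j := 1) (by decide)
      (by ext i; fin_cases i <;> simp)]
    simpa using hc
  · exact le_antisymm (sup_le (le_iSup_of_le 0 le_rfl) (le_iSup_of_le 1 le_rfl))
      (iSup_le (Fin.forall_fin_two.2 ⟨le_sup_left, le_sup_right⟩))

lemma marked_of_isCompl (hc : IsCompl (cyc f v) (cyc f v')) (hv : ExpEq f v t)
    (hv' : ExpEq f v' t') (hW : W.map f ≤ W) (hwW : (f ^ (t - e)) v ∈ W)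
    (hkill : ∀ x ∈ W, (f ^ e) x = 0) : Marked f W := by
  have hinf : (W ⊓ cyc f v').map f ≤ W ⊓ cyc f v' :=
    (Submodule.map_inf_le _).trans (inf_le_inf hW map_cyc_le)
  obtain ⟨s, hs, hWs⟩ := exists_eq_cyc_pow_of_le_cyc hv' hinf inf_le_right
  rw [eq_cyc_pow_sup_inf hc hv hW hwW hkill, hWs]
  exact marked_cyc_pow_sup_cyc_pow hc hv hv' (Nat.sub_le _ _) hs

end Invariant

theorem stmt12_general (f : V →ₗ[K] V) (hf : IsNilpotent f)
    (u₁ u₂ : V) (q : ℕ) (h₁ : ExpEq f u₁ q) (h₂ : ExpEq f u₂ (q + 1))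
    (hV : IsCompl (cyc f u₁) (cyc f u₂)) :
    ∀ W : Submodule K V, W.map f ≤ W → Marked f W := by
  intro W hW
  obtain ⟨N, hN⟩ := hf
  obtain ⟨e, w, hwW, hwe, hkill⟩ :=
    exists_expEq_forall_pow_apply_eq_zero (W := W) ⟨N, fun x _ => by rw [hN]; rfl⟩
  obtain _ | n := e
  · exact marked_of_isCompl hV h₁ h₂ hW (by simp [h₁.1]) hkill
  obtain ⟨a, ha, b, hb, rfl⟩ := Submodule.mem_sup.1 (hV.sup_eq_top ▸ Submodule.mem_top : w ∈ _)
  obtain ⟨hae, hbe⟩ := pow_apply_eq_zero_of_disjoint hV.disjoint ha hb hwe.1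
  by_cases ha' : (f ^ n) a = 0
  · have hb' : ExpEq f b (n + 1) :=
      expEq_succ hbe fun h => hwe.2 n n.lt_succ_self (by rw [map_add, ha', h, add_zero])
    obtain ⟨v, hv, hc, hvw⟩ := exists_isCompl_pow_apply_eq hV.symm h₂ hb hb'
      (by rw [Nat.add_sub_add_right]; exact mem_cyc_pow_of_pow_apply_eq_zero h₁ ha ha') hae
    exact marked_of_isCompl hc hv h₁ hW (by rwa [hvw, add_comm]) hkill
  · obtain ⟨v, hv, hc, hvw⟩ := exists_isCompl_pow_apply_eq hV h₁ ha (expEq_succ hae ha')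
      (cyc_pow_le_cyc_pow (by omega) _ (mem_cyc_pow_of_pow_apply_eq_zero h₂ hb hbe)) hbe
    exact marked_of_isCompl hc hv h₂ hW (hvw ▸ hwW) hkill

theorem stmt12 [FiniteDimensional K V] (f : V →ₗ[K] V) (hf : IsNilpotent f)
    (u₁ u₂ : V) (q : ℕ) (h₁ : ExpEq f u₁ q) (h₂ : ExpEq f u₂ (q + 1))
    (hV : IsCompl (cyc f u₁) (cyc f u₂)) :
    ∀ W : Submodule K V, W.map f ≤ W → Marked f W :=
  stmt12_general f hf u₁ u₂ q h₁ h₂ hV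
end
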